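/- Let G be a finite simple graph and let e = uv be an edge of G that is not contained in any triangle of G (i.e., u and v have no common neighbor in G). Then σ(Ḡ, x) = σ(complement of (G − e), x) + x · σ(complement of G[V ∖ {u,v}], x), where G − e is G with the edge e deleted, G[V ∖ {u,v}] is the subgraph of G induced on the vertices other than u and v, and Ḡ denotes the complement of G. -/

import Mathlib

open Polynomial

/-- `numIndepPartitions G i` is the number of partitions of the vertex set of `G` into
exactly `i` nonempty independent sets, encoded as the number of setoids (equivalence
relations) on `V` with exactly `i` equivalence classes, each class being an independent
set of `G`. -/
noncomputable def numIndepPartitions {V : Type*} (G : SimpleGraph V) (i : ℕ) : ℕ :=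
  Nat.card {P : Setoid V // Nat.card (Quotient P) = i ∧
    ∀ c ∈ P.classes, c.Pairwise fun u v => ¬ G.Adj u v}

/-- The σ-polynomial of a finite simple graph `G`: `σ(G,x) = ∑ aᵢ xⁱ` where `aᵢ` is the
number of partitions of the vertex set of `G` into `i` nonempty independent sets. -/
noncomputable def sigmaPoly {V : Type*} [Finite V] (G : SimpleGraph V) : Polynomial ℝ :=
  ∑ i ∈ Finset.range (Nat.card V + 1), (numIndepPartitions G i : ℝ) • X ^ i

/-!
Partitions of `V` into independent sets of `Ḡ` are partitions into cliques of `G`; split them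
according to whether `u` and `v` share a block. Those separating `u` and `v` are exactly the
partitions into cliques of `G - e`. In those joining them, the block of `u` is exactly `{u, v}`
because `uv` lies in no triangle; deleting it leaves a partition of `V ∖ {u, v}` into cliques of
`G[V ∖ {u, v}]` with one block fewer, whence the factor `x`.
-/

instance Setoid.finite {α : Type*} [Finite α] : Finite (Setoid α) :=
  Finite.of_injective (fun P : Setoid α => P.r) fun _ _ h =>
    Setoid.ext fun a b => by simp only at h; rw [h]

theorem Nat.card_subtype_eq_card_and_add_card_and_not {α : Type*} [Finite α] (p q : α → Prop) :
    Nat.card {a // p a} = Nat.card {a // p a ∧ q a} + Nat.card {a // p a ∧ ¬ q a} := by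
  classical
  rw [← Nat.card_sum]
  exact Nat.card_congr ((Equiv.sumCompl fun a : {a // p a} => q a).symm.trans
    (Equiv.sumCongr (Equiv.subtypeSubtypeEquivSubtypeInter p q)
      (Equiv.subtypeSubtypeEquivSubtypeInter p fun a => ¬ q a)))

namespace Setoid

variable {V : Type*} {s : Set V} {u : V}

open Classical in
/-- The setoid on `V` whose classes are those of `Q` together with `sᶜ`. -/
noncomputable def addComplClass (s : Set V) (Q : Setoid s) : Setoid V :=
  ker fun a => if h : a ∈ s then some (Quotient.mk Q ⟨a, h⟩) else none

variable (Q : Setoid s)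

theorem addComplClass_rel_of_mem {a b : V} (ha : a ∈ s) (hb : b ∈ s) :
    addComplClass s Q a b ↔ Q ⟨a, ha⟩ ⟨b, hb⟩ := by
  rw [addComplClass, ker_def, dif_pos ha, dif_pos hb, Option.some_inj, Quotient.eq]

theorem addComplClass_rel_of_not_mem {a b : V} (ha : a ∉ s) :
    addComplClass s Q a b ↔ b ∉ s := by
  rw [addComplClass, ker_def, dif_neg ha]
  by_cases hb : b ∈ s <;> simp [hb]

theorem comap_val_addComplClass : comap Subtype.val (addComplClass s Q) = Q :=
  ext fun a b => addComplClass_rel_of_mem Q a.2 b.2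

theorem addComplClass_comap_val {P : Setoid V} (hP : ∀ w, P u w ↔ w ∉ s) :
    addComplClass s (comap Subtype.val P) = P := by
  have hcompl : ∀ a, a ∉ s → ∀ b, P a b ↔ b ∉ s := fun a ha b =>
    ⟨fun h => (hP b).1 (P.trans ((hP a).2 ha) h),
      fun hb => P.trans (P.symm ((hP a).2 ha)) ((hP b).2 hb)⟩
  ext a b
  by_cases ha : a ∈ s
  · by_cases hb : b ∈ s
    · exact addComplClass_rel_of_mem _ ha hb
    · rw [comm', comm' P, addComplClass_rel_of_not_mem _ hb, hcompl b hb]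
  · rw [addComplClass_rel_of_not_mem _ ha, hcompl a ha]

theorem card_quotient_addComplClass [Finite V] (hu : u ∉ s) :
    Nat.card (Quotient (addComplClass s Q)) = Nat.card (Quotient Q) + 1 := by
  rw [addComplClass, Nat.card_congr (quotientKerEquivOfSurjective _ ?_), Finite.card_option]
  rintro (_ | q)
  · exact ⟨u, dif_neg hu⟩
  · induction q using Quotient.ind with
    | _ a => exact ⟨a, dif_pos a.2⟩

noncomputable def addComplClassEquiv (hu : u ∉ s) :
    Setoid s ≃ {P : Setoid V // ∀ w, P u w ↔ w ∉ s} where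
  toFun Q := ⟨addComplClass s Q, fun _ => addComplClass_rel_of_not_mem Q hu⟩
  invFun P := comap Subtype.val P.1
  left_inv := comap_val_addComplClass
  right_inv P := Subtype.ext (addComplClass_comap_val P.2)

end Setoid

namespace SimpleGraph

variable {V : Type*}

def IsIndepPartition (H : SimpleGraph V) (P : Setoid V) : Prop :=
  ∀ ⦃a b⦄, P a b → ¬ H.Adj a b

theorem numIndepPartitions_eq_card (H : SimpleGraph V) (i : ℕ) :
    numIndepPartitions H i =
      Nat.card {P : Setoid V // Nat.card (Quotient P) = i ∧ H.IsIndepPartition P} := by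
  refine Nat.card_congr (Equiv.subtypeEquivRight fun P => and_congr_right fun _ => ?_)
  constructor
  · intro h a b hab
    rcases eq_or_ne a b with rfl | hne
    · exact H.irrefl
    · exact h _ ⟨b, rfl⟩ hab (P.refl b) hne
  · rintro h c ⟨y, rfl⟩ a ha b hb _
    exact h (P.trans ha (P.symm hb))

theorem numIndepPartitions_zero [Finite V] [Nonempty V] (H : SimpleGraph V) :
    numIndepPartitions H 0 = 0 := by
  rw [numIndepPartitions_eq_card, Nat.card_eq_zero]
  refine Or.inl ⟨fun ⟨P, hP, _⟩ => ?_⟩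
  have : Nonempty (Quotient P) := .map (Quotient.mk P) ‹_›
  exact Nat.card_pos.ne' hP

theorem numIndepPartitions_eq_zero_of_card_lt [Finite V] (H : SimpleGraph V) {i : ℕ}
    (hi : Nat.card V < i) : numIndepPartitions H i = 0 := by
  rw [numIndepPartitions_eq_card, Nat.card_eq_zero]
  refine Or.inl ⟨fun ⟨P, hP, _⟩ => ?_⟩
  have := Nat.card_le_card_of_surjective (Quotient.mk P) Quotient.mk_surjective
  omega

theorem isIndepPartition_compl_iff (H : SimpleGraph V) (P : Setoid V) :
    Hᶜ.IsIndepPartition P ↔ ∀ ⦃a b⦄, P a b → a ≠ b → H.Adj a b := by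
  simp only [IsIndepPartition, compl_adj, not_and, not_not]

theorem isIndepPartition_sup_edge_iff (H : SimpleGraph V) (P : Setoid V) {u v : V}
    (huv : u ≠ v) : (H ⊔ edge u v).IsIndepPartition P ↔ H.IsIndepPartition P ∧ ¬ P u v := by
  simp only [IsIndepPartition, sup_adj, edge_adj, not_or, not_and]
  constructor
  · intro h
    exact ⟨fun a b hab => (h hab).1, fun hP => (h hP).2 (Or.inl ⟨rfl, rfl⟩) huv⟩
  · rintro ⟨h, hP⟩ a b hab
    refine ⟨h hab, ?_⟩
    rintro (⟨rfl, rfl⟩ | ⟨rfl, rfl⟩) -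
    exacts [hP hab, hP (P.symm hab)]

theorem compl_deleteEdges_singleton (G : SimpleGraph V) (u v : V) :
    (G.deleteEdges {s(u, v)})ᶜ = Gᶜ ⊔ edge u v := by
  ext a b
  simp only [compl_adj, deleteEdges_adj, sup_adj, edge_adj, Set.mem_singleton_iff,
    Sym2.eq_iff]
  tauto

theorem rel_iff_of_isIndepPartition_compl {G : SimpleGraph V} {P : Setoid V} {u v : V}
    (hP : Gᶜ.IsIndepPartition P) (hPuv : P u v)
    (htriangle : ∀ w : V, ¬(G.Adj u w ∧ G.Adj v w)) (w : V) :
    P u w ↔ w ∉ {w : V | w ≠ u ∧ w ≠ v} := by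
  rw [isIndepPartition_compl_iff] at hP
  simp only [Set.mem_ofPred_eq, not_and_or, not_not]
  constructor
  · intro huw
    by_contra! hw
    exact htriangle w ⟨hP huw hw.1.symm, hP (P.trans (P.symm hPuv) huw) hw.2.symm⟩
  · rintro (rfl | rfl)
    exacts [P.refl _, hPuv]

theorem isIndepPartition_compl_addComplClass_iff {G : SimpleGraph V} {u v : V}
    (huv : G.Adj u v) (Q : Setoid {w : V | w ≠ u ∧ w ≠ v}) :
    Gᶜ.IsIndepPartition (Q.addComplClass _) ↔
      (G.induce {w : V | w ≠ u ∧ w ≠ v})ᶜ.IsIndepPartition Q := by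
  simp only [isIndepPartition_compl_iff, induce_adj]
  constructor
  · intro h a b hab hne
    exact h ((Q.addComplClass_rel_of_mem a.2 b.2).2 hab) (Subtype.coe_ne_coe.2 hne)
  · intro h a b hab hne
    by_cases ha : a ∈ {w : V | w ≠ u ∧ w ≠ v}
    · by_cases hb : b ∈ {w : V | w ≠ u ∧ w ≠ v}
      · exact h ((Q.addComplClass_rel_of_mem ha hb).1 hab) (Subtype.coe_ne_coe.1 hne)
      · exact absurd ha ((Q.addComplClass_rel_of_not_mem hb).1 ((Setoid.comm' _).1 hab))
    · have hb := (Q.addComplClass_rel_of_not_mem ha).1 hab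
      simp only [Set.mem_ofPred_eq, not_and_or, not_not] at ha hb
      rcases ha with rfl | rfl <;> rcases hb with rfl | rfl
      exacts [absurd rfl hne, huv, huv.symm, absurd rfl hne]

theorem card_isIndepPartition_compl_rel {G : SimpleGraph V} [Finite V] {u v : V}
    (huv : G.Adj u v) (htriangle : ∀ w : V, ¬(G.Adj u w ∧ G.Adj v w)) (i : ℕ) :
    Nat.card {P : Setoid V // (Nat.card (Quotient P) = i + 1 ∧ Gᶜ.IsIndepPartition P) ∧ P u v} =
      numIndepPartitions (G.induce {w : V | w ≠ u ∧ w ≠ v})ᶜ i := by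
  set s := {w : V | w ≠ u ∧ w ≠ v}
  have hu : u ∉ s := fun h => h.1 rfl
  have hv : v ∉ s := fun h => h.2 rfl
  calc
    _ = Nat.card {P : Setoid V // (∀ w, P u w ↔ w ∉ s) ∧
          Nat.card (Quotient P) = i + 1 ∧ Gᶜ.IsIndepPartition P} :=
      Nat.card_congr <| Equiv.subtypeEquivRight fun P =>
        ⟨fun ⟨h, hPuv⟩ => ⟨rel_iff_of_isIndepPartition_compl h.2 hPuv htriangle, h⟩,
          fun ⟨hcl, h⟩ => ⟨h, (hcl v).2 hv⟩⟩
    _ = Nat.card {P : {P : Setoid V // ∀ w, P u w ↔ w ∉ s} //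
          Nat.card (Quotient P.1) = i + 1 ∧ Gᶜ.IsIndepPartition P.1} :=
      Nat.card_congr (Equiv.subtypeSubtypeEquivSubtypeInter _ _).symm
    _ = numIndepPartitions (G.induce s)ᶜ i := by
      rw [numIndepPartitions_eq_card]
      refine Nat.card_congr ((Setoid.addComplClassEquiv hu).subtypeEquiv fun Q => ?_).symm
      simp only [Setoid.addComplClassEquiv, Equiv.coe_fn_mk,
        Setoid.card_quotient_addComplClass Q hu, Nat.add_right_cancel_iff]
      rw [isIndepPartition_compl_addComplClass_iff huv]

theorem numIndepPartitions_compl_succ {G : SimpleGraph V} [Finite V] {u v : V}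
    (huv : G.Adj u v) (htriangle : ∀ w : V, ¬(G.Adj u w ∧ G.Adj v w)) (i : ℕ) :
    numIndepPartitions Gᶜ (i + 1) = numIndepPartitions (Gᶜ ⊔ edge u v) (i + 1) +
      numIndepPartitions (G.induce {w : V | w ≠ u ∧ w ≠ v})ᶜ i := by
  rw [numIndepPartitions_eq_card, numIndepPartitions_eq_card,
    Nat.card_subtype_eq_card_and_add_card_and_not _ fun P => P u v,
    card_isIndepPartition_compl_rel huv htriangle, add_comm]
  congr 1
  exact Nat.card_congr <| Equiv.subtypeEquivRight fun P => by
    rw [isIndepPartition_sup_edge_iff _ _ huv.ne, and_assoc]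

theorem coeff_sigmaPoly [Finite V] (H : SimpleGraph V) (n : ℕ) :
    (sigmaPoly H).coeff n = numIndepPartitions H n := by
  simp only [sigmaPoly, finsetSum_coeff, coeff_smul, coeff_X_pow, smul_eq_mul, mul_ite, mul_one,
    mul_zero, Finset.sum_ite_eq, Finset.mem_range]
  split_ifs with hn
  · rfl
  · rw [numIndepPartitions_eq_zero_of_card_lt H (by omega), Nat.cast_zero]

end SimpleGraph

theorem sigmaPoly_compl_recursion {V : Type*} [Finite V] (G : SimpleGraph V) (u v : V)
    (huv : G.Adj u v) (htriangle : ∀ w : V, ¬(G.Adj u w ∧ G.Adj v w)) :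
    sigmaPoly Gᶜ =
      sigmaPoly ((G.deleteEdges {s(u, v)})ᶜ) +
        X * sigmaPoly ((G.induce {w : V | w ≠ u ∧ w ≠ v})ᶜ) := by
  have : Nonempty V := ⟨u⟩
  rw [SimpleGraph.compl_deleteEdges_singleton]
  ext (_ | i)
  · simp [SimpleGraph.coeff_sigmaPoly, SimpleGraph.numIndepPartitions_zero]
  · rw [coeff_add, coeff_X_mul, SimpleGraph.coeff_sigmaPoly, SimpleGraph.coeff_sigmaPoly,
      SimpleGraph.coeff_sigmaPoly, SimpleGraph.numIndepPartitions_compl_succ huv htriangle,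
      Nat.cast_add]
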